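/- Let m ≥ 2 be an integer, h > 0, and let λ be a real number with |λ| < e^{−h}. Then the series Σ_{γ=1}^{∞} λ^γ ψ_m(hγ) converges absolutely and Σ_{γ=1}^{∞} λ^γ ψ_m(hγ) = λ · P_{2m−2}(λ) / (4(λe^{h}−1)(e^{h}−λ)(1−λ)^{2m−2}), where P_{2m−2}(λ) = (1−e^{2h})(1−λ)^{2m−2} − 2(λ(e^{2h}+1) − e^{h}(λ²+1)) · Σ_{j=1}^{m−1} (h^{2j−1}/(2j−1)!) · (1−λ)^{2m−2−2j} · E_{2j−2}(λ). -/

import Mathlib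

/-- The `i`-th forward finite difference of the function `γ ↦ γ^k` evaluated at `0`,
i.e. `Δ^i 0^k = ∑_{j=0}^{i} (-1)^(i-j) C(i,j) j^k` (with `0^0 = 1`). -/
noncomputable def finDiff0 (i k : ℕ) : ℝ :=
  ∑ j ∈ Finset.range (i + 1), (-1 : ℝ) ^ (i - j) * (i.choose j : ℝ) * (j : ℝ) ^ k

/-- The Euler polynomial of degree `k`:
`E_k(λ) = ∑_{i=1}^{k+1} Δ^i 0^{k+1} (λ-1)^{k+1-i}`. -/
noncomputable def eulerE (k : ℕ) (x : ℝ) : ℝ :=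
  ∑ i ∈ Finset.Icc 1 (k + 1), finDiff0 i (k + 1) * (x - 1) ^ (k + 1 - i)

/-- `ψ_m(x) = (sign x)/2 · ((e^x - e^{-x})/2 - ∑_{k=1}^{m-1} x^{2k-1}/(2k-1)!)`, the
fundamental solution of `d^{2m}/dx^{2m} - d^{2m-2}/dx^{2m-2}`. -/
noncomputable def psiM (m : ℕ) (x : ℝ) : ℝ :=
  Real.sign x / 2 *
    ((Real.exp x - Real.exp (-x)) / 2 -
      ∑ k ∈ Finset.Icc 1 (m - 1), x ^ (2 * k - 1) / (Nat.factorial (2 * k - 1) : ℝ))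

/-- The polynomial `P_{2m-2}(λ) = (1-e^{2h})(1-λ)^{2m-2}
  - 2(λ(e^{2h}+1) - e^h(λ²+1)) ∑_{j=1}^{m-1} (h^{2j-1}/(2j-1)!) (1-λ)^{2m-2-2j} E_{2j-2}(λ)`. -/
noncomputable def Ppoly (m : ℕ) (h x : ℝ) : ℝ :=
  (1 - Real.exp (2 * h)) * (1 - x) ^ (2 * m - 2) -
    2 * (x * (Real.exp (2 * h) + 1) - Real.exp h * (x ^ 2 + 1)) *
      ∑ j ∈ Finset.Icc 1 (m - 1),
        h ^ (2 * j - 1) / (Nat.factorial (2 * j - 1) : ℝ) *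
          (1 - x) ^ (2 * m - 2 - 2 * j) * eulerE (2 * j - 2) x

/-! For `γ ≥ 1`, `ψ_m(hγ)` is `(e^{hγ} - e^{-hγ})/4` minus half a polynomial in `γ`, so the
series splits into two geometric series and the series `∑ γ^n λ^γ`. The latter comes from Newton's
interpolation formula `x^n = ∑_i Δ^i 0^n · x(x-1)⋯(x-i+1)/i!`: at `x = -(γ+1)` it expresses
`(γ+1)^n` through the binomials `C(γ+i, i)`, whose generating series are `1/(1-λ)^{i+1}`, and
recombining gives `λ E_{n-1}(λ)/(1-λ)^{n+1}`. -/

open Finset fwdDiff Polynomial Nat Real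

lemma finDiff0_eq_fwdDiff_iter (i k : ℕ) :
    finDiff0 i k = (Δ_[1])^[i] (fun x : ℝ ↦ x ^ k) 0 := by
  simp [finDiff0, fwdDiff_iter_eq_sum_shift, zsmul_eq_mul]

lemma finDiff0_eq_zero_of_lt {i k : ℕ} (hki : k < i) : finDiff0 i k = 0 := by
  rw [finDiff0_eq_fwdDiff_iter, fwdDiff_iter_pow_eq_zero_of_lt hki, Pi.zero_apply]

lemma natCast_pow_eq_sum_finDiff0_mul_choose (n N : ℕ) :
    (N : ℝ) ^ n = ∑ i ∈ range (n + 1), finDiff0 i n * N.choose i := by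
  have newton := shift_eq_sum_fwdDiff_iter (1 : ℝ) (fun x : ℝ ↦ x ^ n) N 0
  simp only [zero_add, nsmul_eq_mul, mul_one, ← finDiff0_eq_fwdDiff_iter, mul_comm] at newton
  calc (N : ℝ) ^ n = ∑ i ∈ range (N + 1), finDiff0 i n * N.choose i := newton
    _ = ∑ i ∈ range (n + N + 1), finDiff0 i n * N.choose i := by
      refine sum_subset (range_subset_range.2 (by omega)) fun i _ hi ↦ ?_
      rw [choose_eq_zero_of_lt (by simpa using hi), cast_zero, mul_zero]
    _ = ∑ i ∈ range (n + 1), finDiff0 i n * N.choose i := by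
      refine (sum_subset (range_subset_range.2 (by omega)) fun i _ hi ↦ ?_).symm
      rw [finDiff0_eq_zero_of_lt (by simpa using hi), zero_mul]

lemma pow_eq_sum_finDiff0_mul_descPochhammer (n : ℕ) (x : ℝ) :
    x ^ n = ∑ i ∈ range (n + 1), finDiff0 i n / i ! * (descPochhammer ℝ i).eval x := by
  suffices X ^ n = ∑ i ∈ range (n + 1), C (finDiff0 i n / i !) * descPochhammer ℝ i by
    simpa [eval_finsetSum] using congrArg (eval x) this
  refine eq_of_infinite_eval_eq _ _ ((Set.infinite_range_of_injective cast_injective).mono ?_)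
  rintro _ ⟨N, rfl⟩
  simp only [Set.mem_ofPred_eq, eval_pow, eval_X, eval_finsetSum, eval_mul, eval_C,
    descPochhammer_eval_eq_descFactorial, descFactorial_eq_factorial_mul_choose, cast_mul,
    natCast_pow_eq_sum_finDiff0_mul_choose n N]
  refine sum_congr rfl fun i _ ↦ ?_
  field_simp

lemma descPochhammer_eval_neg_natCast_add_one {R : Type*} [CommRing R] (N i : ℕ) :
    (descPochhammer R i).eval (-((N : R) + 1)) = (-1) ^ i * i ! * (N + i).choose i := by
  have := ascPochhammer_eval_neg_eq_descPochhammer (R := R) (-((N : R) + 1)) i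
  rw [neg_neg, ← cast_succ, ascPochhammer_nat_eq_natCast_ascFactorial,
    ascFactorial_eq_factorial_mul_choose, cast_mul] at this
  rw [mul_assoc, this, ← mul_assoc, ← mul_pow]
  simp

lemma natCast_add_one_pow_eq_sum_finDiff0_mul_choose (n N : ℕ) :
    ((N : ℝ) + 1) ^ n =
      ∑ i ∈ range (n + 1), (-1) ^ (n + i) * finDiff0 i n * (N + i).choose i := by
  have reflect : ((N : ℝ) + 1) ^ n = (-1) ^ n * (-((N : ℝ) + 1)) ^ n := by
    rw [← mul_pow]
    norm_num
  rw [reflect, pow_eq_sum_finDiff0_mul_descPochhammer n (-((N : ℝ) + 1)), mul_sum]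
  refine sum_congr rfl fun i _ ↦ ?_
  rw [descPochhammer_eval_neg_natCast_add_one, pow_add]
  field_simp

lemma eulerE_eq_sum_range (k : ℕ) (x : ℝ) :
    eulerE k x = ∑ i ∈ range (k + 2), finDiff0 i (k + 1) * (x - 1) ^ (k + 1 - i) := by
  have zero_term : finDiff0 0 (k + 1) = 0 := by simp [finDiff0]
  rw [eulerE, range_eq_Ico, sum_eq_sum_Ico_succ_bot (by omega), zero_term, zero_mul, zero_add,
    zero_add, ← Ico_add_one_right_eq_Icc]
  rfl

lemma hasSum_add_one_pow_mul_pow (k : ℕ) {x : ℝ} (hx : |x| < 1) :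
    HasSum (fun γ : ℕ ↦ ((γ : ℝ) + 1) ^ (k + 1) * x ^ (γ + 1))
      (x * eulerE k x / (1 - x) ^ (k + 2)) := by
  have terms := fun i (_ : i ∈ range (k + 2)) ↦
    (hasSum_choose_mul_geometric_of_norm_lt_one i (Real.norm_eq_abs x ▸ hx)).mul_left
      ((-1) ^ (k + 1 + i) * finDiff0 i (k + 1) * x)
  have hx1 : 1 - x ≠ 0 := by linarith [le_abs_self x]
  have summand : (fun γ : ℕ ↦ ((γ : ℝ) + 1) ^ (k + 1) * x ^ (γ + 1)) = fun γ ↦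
      ∑ i ∈ range (k + 2),
        (-1) ^ (k + 1 + i) * finDiff0 i (k + 1) * x * ((γ + i).choose i * x ^ γ) := by
    ext γ
    rw [natCast_add_one_pow_eq_sum_finDiff0_mul_choose, sum_mul]
    exact sum_congr rfl fun i _ ↦ by ring
  have value : x * eulerE k x / (1 - x) ^ (k + 2) = ∑ i ∈ range (k + 2),
      (-1) ^ (k + 1 + i) * finDiff0 i (k + 1) * x * (1 / (1 - x) ^ (i + 1)) := by
    rw [eulerE_eq_sum_range, mul_sum, sum_div]
    refine sum_congr rfl fun i hi ↦ ?_
    have hik : i ≤ k + 1 := by simpa [Nat.lt_succ_iff] using hi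
    have sign : (-1 : ℝ) ^ (k + 1 + i) = (-1) ^ (k + 1 - i) := by
      rw [show k + 1 + i = (k + 1 - i) + 2 * i by omega, pow_add, pow_mul]
      norm_num
    rw [sign, show x - 1 = -(1 - x) by ring, neg_pow,
      show k + 2 = (k + 1 - i) + (i + 1) by omega, pow_add (1 - x)]
    field_simp
  rw [summand, value]
  exact hasSum_sum terms

lemma psiM_of_pos (m : ℕ) {x : ℝ} (hx : 0 < x) :
    psiM m x = (exp x - exp (-x)) / 4 -
      (∑ k ∈ Icc 1 (m - 1), x ^ (2 * k - 1) / (2 * k - 1)! ) / 2 := by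
  rw [psiM, Real.sign_of_pos hx]
  ring

lemma pow_succ_mul_psiM_mul_natCast_add_one (m : ℕ) {h : ℝ} (hh : 0 < h) (x : ℝ) (γ : ℕ) :
    x ^ (γ + 1) * psiM m (h * ((γ : ℝ) + 1)) =
      ((x * exp h) ^ (γ + 1) - (x * exp (-h)) ^ (γ + 1)) / 4 -
        (∑ j ∈ Icc 1 (m - 1),
          h ^ (2 * j - 1) / (2 * j - 1)! * (((γ : ℝ) + 1) ^ (2 * j - 2 + 1) * x ^ (γ + 1))) /
          2 := by
  have exp_mul (t : ℝ) : exp (t * ((γ : ℝ) + 1)) = exp t ^ (γ + 1) := by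
    rw [← exp_nat_mul]
    push_cast
    ring_nf
  rw [psiM_of_pos m (by positivity), ← neg_mul, exp_mul, exp_mul, mul_sub, mul_pow, mul_pow,
    sum_div, sum_div, mul_sum]
  congr 1
  · ring
  · refine sum_congr rfl fun j hj ↦ ?_
    rw [show 2 * j - 2 + 1 = 2 * j - 1 by have := (mem_Icc.mp hj).1; omega, mul_pow]
    ring

lemma sum_mul_eulerE_div (m : ℕ) (h : ℝ) {x : ℝ} (hx : x ≠ 1) :
    ∑ j ∈ Icc 1 (m - 1),
        h ^ (2 * j - 1) / (2 * j - 1)! * (x * eulerE (2 * j - 2) x / (1 - x) ^ (2 * j - 2 + 2)) =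
      x * (∑ j ∈ Icc 1 (m - 1), h ^ (2 * j - 1) / (2 * j - 1)! *
          (1 - x) ^ (2 * m - 2 - 2 * j) * eulerE (2 * j - 2) x) / (1 - x) ^ (2 * m - 2) := by
  rw [mul_sum, sum_div]
  refine sum_congr rfl fun j hj ↦ ?_
  have hj : 1 ≤ j ∧ j ≤ m - 1 := mem_Icc.mp hj
  have hx1 : 1 - x ≠ 0 := sub_ne_zero.mpr hx.symm
  rw [show 2 * j - 2 + 2 = 2 * j by omega,
    ← pow_sub_mul_pow (1 - x) (show 2 * j ≤ 2 * m - 2 by omega)]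
  field_simp

lemma mul_Ppoly_div_eq (m : ℕ) {h x : ℝ} (hx : x ≠ 1) (hxh : x * exp h ≠ 1)
    (hhx : exp h ≠ x) :
    x * Ppoly m h x / (4 * (x * exp h - 1) * (exp h - x) * (1 - x) ^ (2 * m - 2)) =
      (x * exp h * (1 - x * exp h)⁻¹ - x * exp (-h) * (1 - x * exp (-h))⁻¹) / 4 -
        x * (∑ j ∈ Icc 1 (m - 1), h ^ (2 * j - 1) / (2 * j - 1)! *
          (1 - x) ^ (2 * m - 2 - 2 * j) * eulerE (2 * j - 2) x) / (1 - x) ^ (2 * m - 2) / 2 := by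
  have h1 : 1 - x * exp h ≠ 0 := sub_ne_zero.mpr hxh.symm
  have h2 : exp h - x ≠ 0 := sub_ne_zero.mpr hhx
  have h3 : 1 - x ≠ 0 := sub_ne_zero.mpr hx.symm
  unfold Ppoly
  rw [show 2 * h = h + h by ring, exp_add, exp_neg]
  field_simp
  ring

theorem hasSum_pow_mul_psiM_general (m : ℕ) (h : ℝ) (hh : 0 < h)
    (l : ℝ) (hl : |l| < Real.exp (-h)) :
    HasSum (fun γ : ℕ => l ^ (γ + 1) * psiM m (h * ((γ : ℝ) + 1)))
      (l * Ppoly m h l /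
        (4 * (l * Real.exp h - 1) * (Real.exp h - l) * (1 - l) ^ (2 * m - 2))) := by
  have hl1 : |l| < 1 := hl.trans (exp_lt_one_iff.mpr (neg_neg_of_pos hh))
  have up : |l * exp h| < 1 := by
    have := mul_lt_mul_of_pos_right hl (exp_pos h)
    rwa [← exp_add, neg_add_cancel, exp_zero, ← abs_of_pos (exp_pos h), ← abs_mul] at this
  have down : |l * exp (-h)| < 1 := by
    rw [abs_mul, abs_of_pos (exp_pos _)]
    exact mul_lt_one_of_nonneg_of_lt_one_left (abs_nonneg l) hl1 (exp_le_one_iff.mpr (by linarith))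
  have geometric {r : ℝ} (hr : |r| < 1) :
      HasSum (fun γ : ℕ ↦ r ^ (γ + 1)) (r * (1 - r)⁻¹) := by
    simpa only [← _root_.pow_succ'] using (hasSum_geometric_of_abs_lt_one hr).mul_left r
  have series := (((geometric up).sub (geometric down)).div_const 4).sub
    ((hasSum_sum fun j (_ : j ∈ Icc 1 (m - 1)) ↦
      (hasSum_add_one_pow_mul_pow (2 * j - 2) hl1).mul_left
        (h ^ (2 * j - 1) / (2 * j - 1)!)).div_const 2)
  have hl_ne_one : l ≠ 1 := by linarith [le_abs_self l]
  rw [sum_mul_eulerE_div m h hl_ne_one] at series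
  rw [mul_Ppoly_div_eq m hl_ne_one (by linarith [le_abs_self (l * exp h)])
    (by linarith [le_abs_self l, one_lt_exp_iff.mpr hh])]
  exact series.congr_fun (pow_succ_mul_psiM_mul_natCast_add_one m hh l)

/-- Let `m ≥ 2`, `h > 0` and `|λ| < e^{-h}`.  Then the series `∑_{γ=1}^{∞} λ^γ ψ_m(hγ)`
converges and equals `λ P_{2m-2}(λ) / (4(λe^h - 1)(e^h - λ)(1-λ)^{2m-2})`. -/
theorem hasSum_pow_mul_psiM (m : ℕ) (hm : 2 ≤ m) (h : ℝ) (hh : 0 < h)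
    (l : ℝ) (hl : |l| < Real.exp (-h)) :
    HasSum (fun γ : ℕ => l ^ (γ + 1) * psiM m (h * ((γ : ℝ) + 1)))
      (l * Ppoly m h l /
        (4 * (l * Real.exp h - 1) * (Real.exp h - l) * (1 - l) ^ (2 * m - 2))) :=
  hasSum_pow_mul_psiM_general m h hh l hl
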